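/- Explicit upper bound: for every real x ≥ 3, S(x) ≤ (1/2)·(1 + 1/ζ(2))·x·log x + 4x + (√x·log x)/4 + √x. -/

import Mathlib

/-!
Since `⌊x / n⌋ = ⌊⌊x⌋ / n⌋`, it suffices to bound `∑_{n ≤ N} φ(N / n)` for `N = ⌊x⌋`. Split at
`m = ⌊√N⌋`. For `n ≤ m` use `φ(k) ≤ k` and the harmonic bound, which gives `N (1 + log N / 2)`.
For `n > m` the quotient `q = N / n` is at most `m`, and each value `q` is taken by at most
`N / q² + 1` of the `n`, so this part is at most `N ∑_{q ≤ m} φ(q) / q² + m²`. Finally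
`∑_{q ≤ m} φ(q) / q² ≤ (6 / π²) (log m + 3)`: the Dirichlet convolution of `φ(q) / q²` with
`1 / e²` is `1 / k`, so `ζ(2) ∑_{q ≤ m} φ(q) / q²` is the harmonic sum `H_m` up to the tails of
`ζ(2)`, which add up to at most `2`.
-/

open Finset Real

/-- `S x = ∑_{n ≤ x} φ(⌊x/n⌋)`, the sum being over positive integers `n ≤ x`. -/
noncomputable def S (x : ℝ) : ℝ :=
  ∑ n ∈ Finset.Icc 1 ⌊x⌋₊, (Nat.totient ⌊x / (n : ℝ)⌋₊ : ℝ)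

open scoped Nat

lemma pi_sq_div_six_le_sum_Ioc_inv_sq_add (k : ℕ) :
    π ^ 2 / 6 ≤ ∑ e ∈ Ioc 0 k, ((e : ℝ) ^ 2)⁻¹ + 2 / (k + 1) := by
  have hhead : ∑ e ∈ range (k + 1), ((e : ℝ) ^ 2)⁻¹ = ∑ e ∈ Ioc 0 k, ((e : ℝ) ^ 2)⁻¹ := by
    rw [range_eq_Ico, sum_eq_sum_Ico_succ_bot (by omega : 0 < k + 1), Ico_add_one_add_one_eq_Ioc]
    simp
  rw [← hhead, ← hasSum_zeta_two.tsum_eq]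
  refine hasSum_zeta_two.summable.tsum_le_of_sum_range_le fun n ↦ ?_
  simp only [one_div]
  calc ∑ e ∈ range n, ((e : ℝ) ^ 2)⁻¹
      ≤ ∑ e ∈ range (max n (k + 1)), ((e : ℝ) ^ 2)⁻¹ :=
        sum_le_sum_of_subset_of_nonneg (range_mono (le_max_left _ _)) fun _ _ _ ↦ by positivity
    _ = ∑ e ∈ range (k + 1), ((e : ℝ) ^ 2)⁻¹ + ∑ e ∈ Ioo k (max n (k + 1)), ((e : ℝ) ^ 2)⁻¹ := by
        rw [← sum_range_add_sum_Ico _ (le_max_right _ _), Ico_add_one_left_eq_Ioo]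
    _ ≤ _ := by grw [sum_Ioo_inv_sq_le]

lemma sum_Ioc_inv_eq_sum_totient_div_sq_mul (m : ℕ) :
    ∑ k ∈ Ioc 0 m, (k : ℝ)⁻¹ =
      ∑ q ∈ Ioc 0 m, (φ q : ℝ) / q ^ 2 * ∑ e ∈ Ioc 0 (m / q), ((e : ℝ) ^ 2)⁻¹ := by
  let f : ArithmeticFunction ℝ := ⟨fun q ↦ (φ q : ℝ) / q ^ 2, by simp⟩
  let g : ArithmeticFunction ℝ := ⟨fun e ↦ ((e : ℝ) ^ 2)⁻¹, by simp⟩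
  have hfg (k : ℕ) : (f * g) k = (k : ℝ)⁻¹ := by
    calc (f * g) k = ∑ d ∈ k.divisorsAntidiagonal, (φ d.1 : ℝ) / (k : ℝ) ^ 2 := by
          refine (ArithmeticFunction.mul_apply ..).trans <| sum_congr rfl fun d hd ↦ ?_
          rw [← (Nat.mem_divisorsAntidiagonal.mp hd).1]
          simp only [f, g, ArithmeticFunction.coe_mk]
          push_cast
          ring
      _ = (k : ℝ) / (k : ℝ) ^ 2 := by
          rw [← sum_div, Nat.sum_divisorsAntidiagonal (fun d _ ↦ (φ d : ℝ)), ← Nat.cast_sum,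
            Nat.sum_totient]
      _ = (k : ℝ)⁻¹ := by rw [sq, div_self_mul_self']
  simp_rw [← hfg]
  exact ArithmeticFunction.sum_Ioc_mul_eq_sum_sum f g m

lemma sum_Ioc_inv_le_one_add_log (m : ℕ) : ∑ k ∈ Ioc 0 m, (k : ℝ)⁻¹ ≤ 1 + log m := by
  have h := harmonic_le_one_add_log m
  rw [harmonic_eq_sum_Icc] at h
  push_cast at h
  rwa [← Icc_add_one_left_eq_Ioc, zero_add]

lemma totient_div_sq_le_inv (q : ℕ) : (φ q : ℝ) / q ^ 2 ≤ (q : ℝ)⁻¹ := by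
  rcases q.eq_zero_or_pos with rfl | hq
  · simp
  rw [div_le_iff₀ (by positivity), sq, ← mul_assoc, inv_mul_cancel₀ (by positivity), one_mul]
  exact_mod_cast Nat.totient_le q

lemma pi_sq_div_six_mul_totient_div_sq_le {m q : ℕ} (hq : 0 < q) (hqm : q ≤ m) :
    π ^ 2 / 6 * ((φ q : ℝ) / q ^ 2) ≤
      (φ q : ℝ) / q ^ 2 * ∑ e ∈ Ioc 0 (m / q), ((e : ℝ) ^ 2)⁻¹ + 2 / m := by
  have hm : (m : ℝ) ≤ q * ((m / q : ℕ) + 1) := by exact_mod_cast (Nat.lt_mul_div_succ m hq).le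
  calc π ^ 2 / 6 * ((φ q : ℝ) / q ^ 2)
      ≤ (φ q : ℝ) / q ^ 2 * (∑ e ∈ Ioc 0 (m / q), ((e : ℝ) ^ 2)⁻¹ + 2 / ((m / q : ℕ) + 1)) := by
        rw [mul_comm]
        gcongr
        exact pi_sq_div_six_le_sum_Ioc_inv_sq_add _
    _ ≤ (φ q : ℝ) / q ^ 2 * ∑ e ∈ Ioc 0 (m / q), ((e : ℝ) ^ 2)⁻¹ + 2 / m := by
        rw [mul_add]
        gcongr
        calc (φ q : ℝ) / q ^ 2 * (2 / ((m / q : ℕ) + 1))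
            ≤ (q : ℝ)⁻¹ * (2 / ((m / q : ℕ) + 1)) := by grw [totient_div_sq_le_inv]
          _ = 2 / (q * ((m / q : ℕ) + 1)) := by field_simp
          _ ≤ 2 / m := by gcongr; exact_mod_cast hq.trans_le hqm

lemma sum_totient_div_sq_le (m : ℕ) :
    ∑ q ∈ Ioc 0 m, (φ q : ℝ) / q ^ 2 ≤ 6 / π ^ 2 * (log m + 3) := by
  have herr : (m : ℝ) * (2 / m) ≤ 2 := by
    rcases m.eq_zero_or_pos with rfl | hm
    · simp
    · rw [mul_div_cancel₀ _ (by positivity)]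
  have hsum : π ^ 2 / 6 * ∑ q ∈ Ioc 0 m, (φ q : ℝ) / q ^ 2 ≤ 1 + log m + 2 := by
    calc π ^ 2 / 6 * ∑ q ∈ Ioc 0 m, (φ q : ℝ) / q ^ 2
        ≤ ∑ q ∈ Ioc 0 m, ((φ q : ℝ) / q ^ 2 * ∑ e ∈ Ioc 0 (m / q), ((e : ℝ) ^ 2)⁻¹ + 2 / m) := by
          rw [mul_sum]
          exact sum_le_sum fun q hq ↦
            pi_sq_div_six_mul_totient_div_sq_le (mem_Ioc.mp hq).1 (mem_Ioc.mp hq).2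
      _ = ∑ k ∈ Ioc 0 m, (k : ℝ)⁻¹ + m * (2 / m) := by
          rw [sum_add_distrib, sum_Ioc_inv_eq_sum_totient_div_sq_mul, sum_const, Nat.card_Ioc,
            nsmul_eq_mul, Nat.sub_zero]
      _ ≤ 1 + log m + 2 := by grw [sum_Ioc_inv_le_one_add_log, herr]
  rw [div_mul_eq_mul_div, le_div_iff₀ (by positivity)]
  linarith

lemma filter_div_eq_subset_Ioc (N : ℕ) {q : ℕ} (hq : 0 < q) (s : Finset ℕ) :
    {n ∈ s | N / n = q} ⊆ Ioc (N / (q + 1)) (N / q) := by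
  intro n hn
  obtain ⟨-, hnq⟩ := mem_filter.mp hn
  have hn0 : 0 < n := Nat.pos_of_ne_zero fun h ↦ by simp [h] at hnq; omega
  rw [mem_Ioc, Nat.div_lt_iff_lt_mul q.succ_pos, Nat.le_div_iff_mul_le hq]
  constructor
  · have := Nat.lt_mul_div_succ N hn0
    rw [hnq] at this
    linarith
  · simpa [hnq, mul_comm] using Nat.div_mul_le_self N n

lemma card_filter_div_eq_le (N : ℕ) {q : ℕ} (hq : 0 < q) (s : Finset ℕ) :
    (#{n ∈ s | N / n = q} : ℝ) ≤ N / q ^ 2 + 1 := by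
  have hcard := (card_le_card (filter_div_eq_subset_Ioc N hq s)).trans_eq (Nat.card_Ioc _ _)
  rcases Nat.eq_zero_or_pos #{n ∈ s | N / n = q} with h0 | hpos
  · rw [h0, Nat.cast_zero]
    positivity
  have hab : N / (q + 1) ≤ N / q := by omega
  have hlow : (N : ℝ) / (q + 1) < (N / (q + 1) : ℕ) + 1 := by
    rw [div_lt_iff₀ (by positivity)]
    exact_mod_cast (Nat.lt_mul_div_succ N q.succ_pos).trans_eq (mul_comm _ _)
  have hup : ((N / q : ℕ) : ℝ) ≤ N / q := Nat.cast_div_le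
  have hgap : (N : ℝ) / q - N / (q + 1) ≤ N / q ^ 2 := by
    have hq' : (0 : ℝ) < q := by exact_mod_cast hq
    calc (N : ℝ) / q - N / (q + 1) = N / (q * (q + 1)) := by field_simp; ring
      _ ≤ N / q ^ 2 := by rw [sq]; gcongr; linarith
  calc (#{n ∈ s | N / n = q} : ℝ) ≤ ((N / q : ℕ) : ℝ) - (N / (q + 1) : ℕ) := by
        rw [← Nat.cast_sub hab]
        exact_mod_cast hcard
    _ ≤ N / q ^ 2 + 1 := by linarith

lemma sum_Ioc_totient_div_le (N m : ℕ) :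
    ∑ n ∈ Ioc 0 m, (φ (N / n) : ℝ) ≤ N * (1 + log m) := by
  calc ∑ n ∈ Ioc 0 m, (φ (N / n) : ℝ) ≤ ∑ n ∈ Ioc 0 m, N * (n : ℝ)⁻¹ := by
        refine sum_le_sum fun n _ ↦ ?_
        calc (φ (N / n) : ℝ) ≤ (N / n : ℕ) := by exact_mod_cast Nat.totient_le _
          _ ≤ N / n := Nat.cast_div_le
          _ = N * (n : ℝ)⁻¹ := div_eq_mul_inv _ _
    _ ≤ N * (1 + log m) := by
        rw [← mul_sum]
        gcongr
        exact sum_Ioc_inv_le_one_add_log m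

lemma sum_Ioc_totient_div_le_of_lt_sq (N m : ℕ) (hm : N < (m + 1) ^ 2) :
    ∑ n ∈ Ioc m N, (φ (N / n) : ℝ) ≤ N * ∑ q ∈ Ioc 0 m, (φ q : ℝ) / q ^ 2 + m ^ 2 := by
  have hmaps : ∀ n ∈ Ioc m N, N / n ∈ Ioc 0 m := by
    intro n hn
    obtain ⟨hmn, hnN⟩ := mem_Ioc.mp hn
    refine mem_Ioc.mpr ⟨Nat.div_pos hnN (by omega), Nat.lt_succ_iff.mp ?_⟩
    rw [Nat.div_lt_iff_lt_mul (by omega)]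
    calc N < (m + 1) ^ 2 := hm
      _ ≤ (m + 1) * n := by rw [sq]; gcongr; omega
  rw [← sum_fiberwise_of_maps_to hmaps]
  calc ∑ q ∈ Ioc 0 m, ∑ n ∈ Ioc m N with N / n = q, (φ (N / n) : ℝ)
      = ∑ q ∈ Ioc 0 m, (#{n ∈ Ioc m N | N / n = q} : ℝ) * φ q := by
        refine sum_congr rfl fun q _ ↦ ?_
        rw [sum_congr rfl fun n hn ↦ by rw [(mem_filter.mp hn).2], sum_const, nsmul_eq_mul]
    _ ≤ ∑ q ∈ Ioc 0 m, ((N : ℝ) / q ^ 2 + 1) * φ q := by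
        gcongr with q hq
        exact card_filter_div_eq_le N (mem_Ioc.mp hq).1 _
    _ = N * ∑ q ∈ Ioc 0 m, (φ q : ℝ) / q ^ 2 + ∑ q ∈ Ioc 0 m, (φ q : ℝ) := by
        rw [mul_sum, ← sum_add_distrib]
        exact sum_congr rfl fun q _ ↦ by ring
    _ ≤ N * ∑ q ∈ Ioc 0 m, (φ q : ℝ) / q ^ 2 + ∑ q ∈ Ioc 0 m, (m : ℝ) := by
        gcongr with q hq
        exact_mod_cast (Nat.totient_le q).trans (mem_Ioc.mp hq).2
    _ = N * ∑ q ∈ Ioc 0 m, (φ q : ℝ) / q ^ 2 + m ^ 2 := by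
        rw [sum_const, Nat.card_Ioc, nsmul_eq_mul, Nat.sub_zero, sq]

lemma log_natSqrt_le (N : ℕ) : log (Nat.sqrt N) ≤ log N / 2 := by
  rcases N.sqrt.eq_zero_or_pos with h0 | hpos
  · rw [h0, Nat.cast_zero, log_zero]
    linarith [Real.log_natCast_nonneg N]
  · calc log (Nat.sqrt N) = log ((Nat.sqrt N : ℝ) ^ 2) / 2 := by rw [log_pow]; ring
      _ ≤ log N / 2 := by gcongr; exact_mod_cast N.sqrt_le'

lemma sum_totient_div_le (N : ℕ) :
    ∑ n ∈ Ioc 0 N, (φ (N / n) : ℝ) ≤ (1 + 6 / π ^ 2) / 2 * N * log N + 4 * N := by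
  set m := N.sqrt
  have hlog : log m ≤ log N / 2 := log_natSqrt_le N
  have hm2 : (m : ℝ) ^ 2 ≤ N := by exact_mod_cast N.sqrt_le'
  have hπ : 6 / π ^ 2 * 3 ≤ 2 := by
    rw [div_mul_eq_mul_div, div_le_iff₀ (by positivity)]
    nlinarith [pi_gt_three]
  have hT : N * ∑ q ∈ Ioc 0 m, (φ q : ℝ) / q ^ 2 ≤ N * (6 / π ^ 2 * (log N / 2 + 3)) := by
    grw [sum_totient_div_sq_le m, hlog]
  rw [← sum_Ioc_consecutive _ m.zero_le N.sqrt_le_self]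
  grw [sum_Ioc_totient_div_le N m, sum_Ioc_totient_div_le_of_lt_sq N m N.lt_succ_sqrt', hT, hlog,
    hm2]
  have := mul_le_mul_of_nonneg_left hπ (Nat.cast_nonneg N : (0 : ℝ) ≤ N)
  linarith

lemma S_eq_sum_totient_floor_div (x : ℝ) : S x = ∑ n ∈ Ioc 0 ⌊x⌋₊, (φ (⌊x⌋₊ / n) : ℝ) := by
  rw [S, ← Icc_add_one_left_eq_Ioc, zero_add]
  simp_rw [Nat.floor_div_natCast]

theorem S_explicit_upper_bound (x : ℝ) (hx : 3 ≤ x) :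
    S x ≤ (1 / 2) * (1 + 1 / (Real.pi ^ 2 / 6)) * x * Real.log x + 4 * x +
      Real.sqrt x * Real.log x / 4 + Real.sqrt x := by
  have hN : (⌊x⌋₊ : ℝ) ≤ x := Nat.floor_le (by linarith)
  have hN1 : (1 : ℝ) ≤ ⌊x⌋₊ := by exact_mod_cast Nat.le_floor (by push_cast; linarith)
  have hlog : 0 ≤ log x := log_nonneg (by linarith)
  rw [S_eq_sum_totient_floor_div, one_div_div]
  calc _ ≤ (1 + 6 / π ^ 2) / 2 * ⌊x⌋₊ * log ⌊x⌋₊ + 4 * ⌊x⌋₊ := sum_totient_div_le _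
    _ ≤ (1 + 6 / π ^ 2) / 2 * x * log x + 4 * x := by gcongr
    _ ≤ _ := by
        have : 0 ≤ √x * log x / 4 + √x := by positivity
        linarith
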